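/- In the homogeneous complete-graph setting (α_x = α, β_x = β, λ_x = λ, α ≤ β, k_c = 1), suppose W is a Nash equilibrium in which some unit x uses two distinct resources y₁, y₂ (i.e., W_{x y₁} > 0 and W_{x y₂} > 0) neither of which is fully congested (W_{y₁} < β and W_{y₂} < β). Then k_a ≤ 1/β. -/
import Mathlib


open Finset

def col {X : Type*} [Fintype X] (W : X → X → ℕ) (y : X) : ℕ := ∑ x, W x y

def move {X : Type*} [DecidableEq X] (W : X → X → ℕ) (x y y' : X) : X → X → ℕ :=
  fun a b => (W a b + (if a = x ∧ b = y' then 1 else 0)) - (if a = x ∧ b = y then 1 else 0)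

/-- Utility for the homogeneous complete-graph case with `k_c = 1`:
`f_{xy}(W) = λ - W_y / β + k_a · W_{xy}`. -/
noncomputable def util {X : Type*} [Fintype X] (lam : ℝ) (β : ℕ) (ka : ℝ)
    (W : X → X → ℕ) (x y : X) : ℝ :=
  lam - (col W y : ℝ) / (β : ℝ) + ka * (W x y : ℝ)


lemma move_self {X : Type*} [DecidableEq X] (W : X → X → ℕ) (x y y' : X) (h : y ≠ y') :
    move W x y y' x y' = W x y' + 1 := by
  simp [move, h.symm]

lemma col_move {X : Type*} [Fintype X] [DecidableEq X] (W : X → X → ℕ) (x y y' : X)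
    (h : y ≠ y') : col (move W x y y') y' = col W y' + 1 := by
  unfold col move
  have h2 : ∀ a ∈ Finset.univ, ((W a y' + if a = x ∧ y' = y' then 1 else 0) - if a = x ∧ y' = y then 1 else 0)
      = W a y' + (if a = x then 1 else 0) := fun a _ => by simp [h.symm]
  rw [Finset.sum_congr rfl h2, Finset.sum_add_distrib]
  simp

/-- In the homogeneous complete-graph setting, if a Nash equilibrium has a unit `x` using two
distinct, not fully congested resources `y₁, y₂`, then `k_a ≤ 1/β`. -/
theorem nash_two_resources_ka_le {X : Type*} [Fintype X] [DecidableEq X]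
    (α β : ℕ) (lam ka : ℝ) (hka : 0 ≤ ka) (hαβ : α ≤ β) (hβ : 0 < β)
    (W : X → X → ℕ)
    (hdiag : ∀ x, W x x = 0)
    (hrow : ∀ x, ∑ y, W x y = α)
    (hcol : ∀ y, col W y ≤ β)
    (hnash : ∀ x y y', y ≠ x → 0 < W x y → y' ≠ x → col W y' < β →
        util lam β ka (move W x y y') x y' ≤ util lam β ka W x y)
    (x y₁ y₂ : X) (hy12 : y₁ ≠ y₂) (hy1x : y₁ ≠ x) (hy2x : y₂ ≠ x)
    (h1 : 0 < W x y₁) (h2 : 0 < W x y₂)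
    (hc1 : col W y₁ < β) (hc2 : col W y₂ < β) :
    ka ≤ 1 / (β : ℝ) := by
  have n1 := hnash x y₁ y₂ hy1x h1 hy2x hc2
  have n2 := hnash x y₂ y₁ hy2x h2 hy1x hc1
  rw [util, util, move_self W x y₁ y₂ hy12, col_move W x y₁ y₂ hy12] at n1
  rw [util, util, move_self W x y₂ y₁ hy12.symm, col_move W x y₂ y₁ hy12.symm] at n2
  have hβ' : (0:ℝ) < (β:ℝ) := by exact_mod_cast hβ
  push_cast at n1 n2
  rw [le_div_iff₀ hβ']
  have m1 := mul_le_mul_of_nonneg_right n1 hβ'.le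
  have m2 := mul_le_mul_of_nonneg_right n2 hβ'.le
  field_simp at m1 m2
  nlinarith [m1, m2]
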